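/- arXiv:2110.10602 — 4 statements merged into one kernel-verified Lean document; each statement's English description precedes it below -/
import Mathlib

section
/- (Sauer's lemma for the relaxed robust shattering dimension) For any class H ⊆ {±1}^X, any perturbation set U, and any sequence z_1,…,z_n ∈ X, the number of distinct vectors (h(z_1),…,h(z_n)) realizable by some h ∈ H together with witnesses x_1,…,x_n ∈ X satisfying z_i ∈ U(x_i) and h constant equal to h(z_i) on U(x_i) for all i, is at most Σ_{i=0}^{d} C(n, i), where d = rdim_U(H). -/
def RelShat {X : Type*} (H : Set (X → Bool)) (U : X → Set X) {k : ℕ} (z : Fin k → X) : Prop :=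
  ∀ y : Fin k → Bool, ∃ x : Fin k → X, ∃ h ∈ H,
    ∀ i : Fin k, z i ∈ U (x i) ∧ ∀ w ∈ U (x i), h w = y i

noncomputable def rdim {X : Type*} (H : Set (X → Bool)) (U : X → Set X) : ℕ∞ :=
  ⨆ (k : ℕ) (_ : ∃ z : Fin k → X, RelShat H U z), (k : ℕ∞)

/-- Sauer's lemma for the relaxed robust shattering dimension: the number of robustly
realizable behaviors on `z_1, …, z_n` is at most `Σ_{i ≤ d} C(n, i)` where `d = rdim_U(H)`. -/
theorem stmt_6 {X : Type*} (H : Set (X → Bool)) (U : X → Set X) (n d : ℕ)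
    (hd : rdim H U ≤ (d : ℕ∞)) (z : Fin n → X) :
    Set.ncard {v : Fin n → Bool | ∃ x : Fin n → X, ∃ h ∈ H,
        (∀ i : Fin n, z i ∈ U (x i) ∧ ∀ w ∈ U (x i), h w = h (z i)) ∧
        v = fun i => h (z i)} ≤
      ∑ i ∈ Finset.range (d + 1), n.choose i := by
  classical
  set S : Set (Fin n → Bool) := {v : Fin n → Bool | ∃ x : Fin n → X, ∃ h ∈ H,
        (∀ i : Fin n, z i ∈ U (x i) ∧ ∀ w ∈ U (x i), h w = h (z i)) ∧
        v = fun i => h (z i)} with hS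
  have hfin : S.Finite := Set.toFinite _
  set V : Finset (Fin n → Bool) := hfin.toFinset with hV
  set f : (Fin n → Bool) → Finset (Fin n) := fun v => Finset.univ.filter (fun i => v i = true)
    with hf
  have hfinj : Function.Injective f := by
    intro v w hvw
    funext i
    have : (i ∈ f v) = (i ∈ f w) := by rw [hvw]
    simp only [hf, Finset.mem_filter, Finset.mem_univ, true_and, eq_iff_iff] at this
    cases hv : v i <;> cases hw : w i <;> simp_all
  set 𝒜 : Finset (Finset (Fin n)) := V.image f with h𝒜
  -- key claim : vcDim 𝒜 ≤ d
  have hvc : 𝒜.vcDim ≤ d := by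
    rw [Finset.vcDim, Finset.sup_le_iff]
    intro s hs
    rw [Finset.mem_shatterer] at hs
    set k := s.card with hk
    set e : Fin k → Fin n := ⇑(s.orderEmbOfFin rfl) with he
    have heS : ∀ j, e j ∈ s := fun j => s.orderEmbOfFin_mem rfl j
    have hshat : RelShat H U (fun j : Fin k => z (e j)) := by
      intro y
      obtain ⟨u, hu, hsu⟩ := hs (t := (Finset.univ.filter (fun j => y j = true)).image e)
        (by intro a ha; simp only [Finset.mem_image] at ha; obtain ⟨j, _, rfl⟩ := ha
            exact heS j)
      rw [h𝒜, Finset.mem_image] at hu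
      obtain ⟨v, hv, rfl⟩ := hu
      rw [hV, Set.Finite.mem_toFinset, hS] at hv
      obtain ⟨x, h, hH, hrob, rfl⟩ := hv
      refine ⟨fun j => x (e j), h, hH, fun j => ⟨(hrob (e j)).1, fun w hw => ?_⟩⟩
      have h1 : (hrob (e j)).2 w hw = _ := rfl
      rw [(hrob (e j)).2 w hw]
      -- show h (z (e j)) = y j
      have hmem : e j ∈ s ∩ f (fun i => h (z i)) ↔
          e j ∈ (Finset.univ.filter (fun j => y j = true)).image e := by rw [hsu]
      simp only [Finset.mem_inter, Finset.mem_filter, Finset.mem_univ, true_and, hf,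
        Finset.mem_image] at hmem
      cases hy : y j
      · cases hz : h (z (e j))
        · rfl
        · exfalso
          have := hmem.1 ⟨heS j, hz⟩
          obtain ⟨j', hj', hj'e⟩ := this
          have : j' = j := (s.orderEmbOfFin rfl).injective hj'e
          subst this; simp [hy] at hj'
      · exact (hmem.2 ⟨j, by simp [hy], rfl⟩).2
    have : (k : ℕ∞) ≤ rdim H U := by
      refine le_trans ?_ (le_iSup _ k)
      exact le_iSup (fun _ : ∃ z' : Fin k → X, RelShat H U z' => (k : ℕ∞))
        ⟨fun j => z (e j), hshat⟩
    exact_mod_cast this.trans hd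
  have h1 : S.ncard = V.card := Set.ncard_eq_toFinset_card S hfin
  have h2 : V.card = 𝒜.card := (Finset.card_image_of_injective V hfinj).symm
  calc S.ncard = 𝒜.card := by rw [h1, h2]
    _ ≤ 𝒜.shatterer.card := Finset.card_le_card_shatterer 𝒜
    _ ≤ ∑ k ∈ Finset.Iic 𝒜.vcDim, (Fintype.card (Fin n)).choose k :=
        Finset.card_shatterer_le_sum_vcDim
    _ ≤ ∑ i ∈ Finset.range (d + 1), n.choose i := by
        simp only [Fintype.card_fin]
        refine Finset.sum_le_sum_of_subset ?_
        intro i hi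
        simp only [Finset.mem_Iic] at hi
        simp only [Finset.mem_range]
        omega
end

section
/- (Key step of Sauer's lemma proof) For any class H, perturbation set U, and points z_1,…,z_n, the cardinality of Π^U_H(z_1,…,z_n) is at most the number of subsets S ⊆ {z_1,…,z_n} that are relaxed U-robustly shattered by H. -/
/-!
Send each realizable pattern `v = h ∘ z` to the finite set of points `z i` that it labels
`true`. Because `v` factors through `z`, this map is injective, so the patterns form a family
`G` of subsets of `{z_1, …, z_n}` of the same size. By Pajor's form of the Sauer–Shelah lemma,
`G` shatters at least `|G|` sets, and a set `S` shattered by `G` is relaxed `U`-robustly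
shattered by `H`: each `T ⊆ S` is cut out by some `h ∈ H` that comes with robust witnesses.
-/

/-- A finite set `S ⊆ X` is relaxed `U`-robustly shattered by `H` if for every sign
assignment `y` on its elements there are witnesses `x a` with `a ∈ U (x a)` and some
`h ∈ H` constantly equal to `y a` on each `U (x a)`.  (The empty set is always shattered.) -/
def RelShatSet {X : Type*} (H : Set (X → Bool)) (U : X → Set X) (S : Finset X) : Prop :=
  ∀ y : X → Bool, ∃ x : X → X, ∃ h ∈ H,
    ∀ a ∈ S, a ∈ U (x a) ∧ ∀ w ∈ U (x a), h w = y a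

open Finset

section RobustPatterns

variable {X : Type*} {H : Set (X → Bool)} {U : X → Set X} {n : ℕ} {z : Fin n → X}

theorem relShatSet_of_forall_subset {S : Finset X}
    (hS : ∀ T ⊆ S, ∃ h ∈ H, ∀ a ∈ S,
      (h a = true ↔ a ∈ T) ∧ ∃ x, a ∈ U x ∧ ∀ w ∈ U x, h w = h a) :
    RelShatSet H U S := by
  classical
  intro y
  obtain ⟨h, hH, hcut⟩ := hS (S.filter (y · = true)) (filter_subset _ _)
  choose! x hxU hconst using fun a ha => (hcut a ha).2
  refine ⟨x, h, hH, fun a ha => ⟨hxU a ha, fun w hw => ?_⟩⟩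
  rw [hconst a ha w hw, Bool.eq_iff_iff]
  simpa [ha] using (hcut a ha).1

variable (H U z) in
def robustPatterns : Set (Fin n → Bool) :=
  {v | ∃ x : Fin n → X, ∃ h ∈ H,
    (∀ i : Fin n, z i ∈ U (x i) ∧ ∀ w ∈ U (x i), h w = h (z i)) ∧ v = fun i => h (z i)}

theorem robustPatterns_subset_range_comp :
    robustPatterns H U z ⊆ Set.range fun h : X → Bool => h ∘ z := by
  rintro _ ⟨-, h, -, -, rfl⟩
  exact ⟨h, rfl⟩

variable [DecidableEq X]

variable (z) in
def positiveSet (v : Fin n → Bool) : Finset X :=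
  (univ.filter (v · = true)).image z

theorem positiveSet_subset_range (v : Fin n → Bool) : ↑(positiveSet z v) ⊆ Set.range z := by
  simp [positiveSet, Set.subset_def]

theorem mem_positiveSet_comp {h : X → Bool} {a : X} :
    a ∈ positiveSet z (h ∘ z) ↔ a ∈ Set.range z ∧ h a = true := by
  simp only [positiveSet, mem_image, mem_filter, mem_univ, true_and, Function.comp_apply]
  constructor
  · rintro ⟨i, hi, rfl⟩
    exact ⟨⟨i, rfl⟩, hi⟩
  · rintro ⟨⟨i, rfl⟩, hi⟩
    exact ⟨i, hi, rfl⟩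

theorem positiveSet_injOn_range_comp :
    Set.InjOn (positiveSet z) (Set.range fun h : X → Bool => h ∘ z) := by
  rintro _ ⟨g, rfl⟩ _ ⟨h, rfl⟩ hgh
  funext i
  have hi := congrArg (z i ∈ ·) hgh
  simp only [mem_positiveSet_comp, Set.mem_range_self, true_and, eq_iff_iff] at hi
  exact Bool.eq_iff_iff.2 hi

theorem range_and_relShatSet_of_shatters {G : Finset (Finset X)}
    (hG : ∀ u ∈ G, ∃ v ∈ robustPatterns H U z, positiveSet z v = u) {S : Finset X}
    (hS : G.Shatters S) : ↑S ⊆ Set.range z ∧ RelShatSet H U S := by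
  have hSz : ↑S ⊆ Set.range z := by
    obtain ⟨u, hu, hSu⟩ := hS.exists_superset
    obtain ⟨v, -, rfl⟩ := hG u hu
    exact (coe_subset.2 hSu).trans (positiveSet_subset_range v)
  refine ⟨hSz, relShatSet_of_forall_subset fun T hT => ?_⟩
  obtain ⟨u, hu, hSuT⟩ := hS hT
  obtain ⟨_, ⟨x, h, hH, hx, rfl⟩, rfl⟩ := hG u hu
  refine ⟨h, hH, fun a ha => ?_⟩
  obtain ⟨i, rfl⟩ := hSz ha
  refine ⟨?_, x i, hx i⟩
  rw [← hSuT, mem_inter, and_iff_right ha]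
  exact (mem_positiveSet_comp.trans (and_iff_right (Set.mem_range_self i))).symm

end RobustPatterns

theorem finite_setOf_coe_subset_range {X ι : Type*} [Finite ι] (z : ι → X) :
    {S : Finset X | ↑S ⊆ Set.range z}.Finite :=
  (Set.finite_range z).finite_subsets.preimage coe_injective.injOn

/-- Key step of the Sauer argument: `|Π^U_H(z_1,…,z_n)|` is at most the number of
subsets of `{z_1,…,z_n}` that are relaxed `U`-robustly shattered by `H`. -/
theorem stmt_7 {X : Type*} (H : Set (X → Bool)) (U : X → Set X) (n : ℕ) (z : Fin n → X) :
    Set.ncard {v : Fin n → Bool | ∃ x : Fin n → X, ∃ h ∈ H,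
        (∀ i : Fin n, z i ∈ U (x i) ∧ ∀ w ∈ U (x i), h w = h (z i)) ∧
        v = fun i => h (z i)} ≤
      Set.ncard {S : Finset X | ↑S ⊆ Set.range z ∧ RelShatSet H U S} := by
  classical
  change (robustPatterns H U z).ncard ≤ _
  have hP := (robustPatterns H U z).toFinite
  set G := hP.toFinset.image (positiveSet z)
  have hGP : ∀ u ∈ G, ∃ v ∈ robustPatterns H U z, positiveSet z v = u := by
    simp [G]
  have hinj : Set.InjOn (positiveSet z) ↑hP.toFinset := by
    rw [Set.Finite.coe_toFinset]
    exact positiveSet_injOn_range_comp.mono robustPatterns_subset_range_comp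
  calc (robustPatterns H U z).ncard = G.card := by
        rw [Set.ncard_eq_toFinset_card _ hP, card_image_of_injOn hinj]
    _ ≤ G.shatterer.card := card_le_card_shatterer G
    _ = (↑G.shatterer : Set (Finset X)).ncard := (Set.ncard_coe_finset _).symm
    _ ≤ _ := Set.ncard_le_ncard
        (fun S hS => range_and_relShatSet_of_shatters hGP (mem_shatterer.1 hS))
        ((finite_setOf_coe_subset_range z).subset fun _ hS => hS.1)
end

section
/- (Realizable transductive guarantee) Let H be a hypothesis class with rdim_{U^{-1}}(H) = d < ∞ and let D be a distribution over X × {±1} with OPT_{U^{-1}(U)} = 0. Draw (x, y) ∼ D^n and (x̃, ỹ) ∼ D^n. Then with probability at least 1 − δ, for all perturbations z ∈ U(x) and z̃ ∈ U(x̃), every ĥ ∈ H satisfying R_{U^{-1}}(ĥ; z, y) = 0 and R_{U^{-1}}(ĥ; z̃) = 0 has test error err_{z̃,ỹ}(ĥ) ≤ (d log(2n) + log(1/δ))/n. -/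
/-!
Symmetrization by swaps. The training and test samples are i.i.d., so exchanging the `i`-th
training point with the `i`-th test point, for all `i` with `σ i = true`, preserves the law of
the pair; hence it suffices to show that for every pooled sample of `2n` labelled points at most
`2ⁿ δ` of the `2ⁿ` swap patterns `σ` are bad.

For a bad `σ`, the witnessing `h` robustly realizes, on all `2n` points, the true labels flipped
on a set `E` of at least `κ = ⌊B⌋₊ + 1` test positions (its test errors). The realizable flip
sets form a family of VC dimension at most `rdim_{U⁻¹}(H) ≤ d`, so by Sauer–Shelah there are at
most `(2n)ᵈ` of them, while a fixed `E` lies among the test positions for at most `2^(n - κ)`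
patterns.
As `2^κ > 2^B = (2n)ᵈ / δ`, at most `2ⁿ δ` patterns are bad. For `d = 1` Sauer–Shelah only gives
`2n + 1` sets; there the count uses that the one-inclusion graph of a maximum class joins sets
of different sizes.
-/

open MeasureTheory

def Uinv {X : Type*} (U : X → Set X) (z : X) : Set X := {x | z ∈ U x}

def UinvU {X : Type*} (U : X → Set X) (x : X) : Set X := ⋃ z ∈ U x, Uinv U z

open Finset
open scoped ENNReal

namespace Nat

lemma two_mul_choose_le_pow (m : ℕ) {k : ℕ} (hk : 2 ≤ k) : 2 * m.choose k ≤ m ^ k :=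
  calc 2 * m.choose k ≤ k ! * m.choose k :=
        Nat.mul_le_mul_right _ (hk.trans (Nat.self_le_factorial k))
    _ = m.descFactorial k := (Nat.descFactorial_eq_factorial_mul_choose m k).symm
    _ ≤ m ^ k := Nat.descFactorial_le_pow m k

lemma sum_Iic_choose_le_pow {m d : ℕ} (hm : 2 ≤ m) (hd : d ≠ 1) :
    ∑ k ∈ Iic d, m.choose k ≤ m ^ d := by
  obtain rfl | hd2 : d = 0 ∨ 2 ≤ d := by omega
  · simp [← Nat.range_succ_eq_Iic]
  induction d, hd2 using Nat.le_induction with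
  | base =>
    obtain ⟨m, rfl⟩ : ∃ m', m = m' + 2 := ⟨m - 2, by omega⟩
    have hchoose : 2 * (m + 2).choose 2 = (m + 2) * (m + 1) := by
      have := Nat.descFactorial_eq_factorial_mul_choose (m + 2) 2
      simp [Nat.descFactorial_succ, Nat.factorial] at this
      linarith
    simp only [← Nat.range_succ_eq_Iic, Finset.sum_range_succ, Finset.sum_range_zero,
      Nat.choose_zero_right, Nat.choose_one_right]
    nlinarith
  | succ d hd ih =>
    rw [← Nat.range_succ_eq_Iic, Finset.sum_range_succ, Nat.range_succ_eq_Iic]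
    have h1 := ih (by omega)
    have h2 := two_mul_choose_le_pow m (k := d + 1) (by omega)
    have h3 : 2 * m ^ d ≤ m ^ (d + 1) := by
      rw [pow_succ']; exact Nat.mul_le_mul_right _ hm
    omega

end Nat

namespace Finset

variable {α : Type*} [DecidableEq α] {𝒜 : Finset (Finset α)}

lemma card_le_sum_Iic_choose [Fintype α] {d : ℕ} (h𝒜 : 𝒜.vcDim ≤ d) :
    #𝒜 ≤ ∑ k ∈ Iic d, (Fintype.card α).choose k :=
  𝒜.card_le_card_shatterer.trans <| card_shatterer_le_sum_vcDim.trans <|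
    Finset.sum_le_sum_of_subset (Iic_subset_Iic.2 h𝒜)

lemma card_le_pow_of_vcDim_le [Fintype α] {d : ℕ} (hα : 2 ≤ Fintype.card α)
    (h𝒜 : 𝒜.vcDim ≤ d) (hd : d ≠ 1) : #𝒜 ≤ Fintype.card α ^ d :=
  (card_le_sum_Iic_choose h𝒜).trans (Nat.sum_Iic_choose_le_pow hα hd)

lemma Shatters.of_image_erase {a : α} {s : Finset α}
    (hs : (𝒜.image (·.erase a)).Shatters s) : a ∉ s ∧ 𝒜.Shatters s := by
  have ha : a ∉ s := by
    obtain ⟨u, hu, hsu⟩ := hs.exists_superset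
    obtain ⟨t, -, rfl⟩ := mem_image.1 hu
    exact fun has => notMem_erase a t (hsu has)
  refine ⟨ha, fun t ht => ?_⟩
  obtain ⟨u, hu, rfl⟩ := hs ht
  obtain ⟨v, hv, rfl⟩ := mem_image.1 hu
  exact ⟨v, hv, by rw [inter_erase, erase_eq_of_notMem fun h => ha (mem_inter.1 h).1]⟩

lemma card_image_erase_le_of_vcDim_le_one [Fintype α] (h𝒜 : 𝒜.vcDim ≤ 1) (a : α) :
    #(𝒜.image (·.erase a)) ≤ Fintype.card α := by
  have hsub : (𝒜.image (·.erase a)).shatterer ⊆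
      insert ∅ ((univ.erase a).image ({·})) := by
    intro s hs
    obtain ⟨ha, hs⟩ := (mem_shatterer.1 hs).of_image_erase
    have hcard : #s ≤ 1 := hs.card_le_vcDim.trans h𝒜
    obtain rfl | ⟨x, hx⟩ := s.eq_empty_or_nonempty
    · exact mem_insert_self _ _
    · have hsx : s = {x} := eq_singleton_iff_unique_mem.2
        ⟨hx, fun y hy => card_le_one.1 hcard y hy x hx⟩
      subst hsx
      exact mem_insert_of_mem (mem_image.2 ⟨x, by simpa [eq_comm] using ha, rfl⟩)
  calc #(𝒜.image (·.erase a)) ≤ #(insert ∅ ((univ.erase a).image ({·}) : Finset (Finset α))) :=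
        card_le_card_shatterer _ |>.trans (card_le_card hsub)
    _ ≤ #((univ.erase a).image ({·}) : Finset (Finset α)) + 1 := card_insert_le _ _
    _ ≤ #(univ.erase a) + 1 := by gcongr; exact card_image_le
    _ = Fintype.card α := by
      rw [card_erase_of_mem (mem_univ a), card_univ]
      have := Fintype.card_pos_iff.2 ⟨a⟩
      omega

lemma exists_insert_mem_of_card_eq [Fintype α] (h𝒜 : 𝒜.vcDim ≤ 1)
    (hcard : #𝒜 = Fintype.card α + 1) (a : α) : ∃ s ∈ 𝒜, a ∉ s ∧ insert a s ∈ 𝒜 := by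
  have hunion := card_union_add_card_inter (𝒜.memberSubfamily a) (𝒜.nonMemberSubfamily a)
  rw [card_memberSubfamily_add_card_nonMemberSubfamily,
    memberSubfamily_union_nonMemberSubfamily] at hunion
  have := card_image_erase_le_of_vcDim_le_one h𝒜 a
  obtain ⟨s, hs⟩ : (𝒜.memberSubfamily a ∩ 𝒜.nonMemberSubfamily a).Nonempty :=
    card_pos.1 (by omega)
  obtain ⟨⟨hins, has⟩, hs, -⟩ := And.imp mem_memberSubfamily.1 mem_nonMemberSubfamily.1
    (mem_inter.1 hs)
  exact ⟨s, hs, has, hins⟩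

/-- Edges `s, insert a s` of the one-inclusion graph join sets of different sizes, so they cannot
all avoid a single exceptional member `u` of size `≠ k`: walking along an edge leaving `u`
forces `#u + 1 = k`, along one entering `u` forces `#u = k + 1`. -/
lemma two_le_card_filter_card_ne [Fintype α] (h𝒜 : 𝒜.vcDim ≤ 1)
    (hcard : #𝒜 = Fintype.card α + 1) (huniv : univ ∉ 𝒜) {k : ℕ} (hk : k ≠ 1) :
    2 ≤ #{s ∈ 𝒜 | #s ≠ k} := by
  by_contra! hR
  have huniq : ∀ s ∈ 𝒜, ∀ t ∈ 𝒜, #s ≠ k → #t ≠ k → s = t := fun s hs t ht hsk htk =>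
    (card_le_one (s := {s ∈ 𝒜 | #s ≠ k})).1 (by omega) s (mem_filter.2 ⟨hs, hsk⟩) t
      (mem_filter.2 ⟨ht, htk⟩)
  have hedge := exists_insert_mem_of_card_eq h𝒜 hcard
  have hne_univ : ∀ s ∈ 𝒜, ∃ a, a ∉ s := fun s hs => by
    by_contra! h
    exact huniv (eq_univ_iff_forall.2 h ▸ hs)
  obtain ⟨s₀, hs₀⟩ : 𝒜.Nonempty := card_pos.1 (by omega)
  obtain ⟨b, -⟩ := hne_univ s₀ hs₀
  obtain ⟨u, hu, huk⟩ : ∃ u ∈ 𝒜, #u ≠ k := by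
    obtain ⟨s, hs, hbs, hins⟩ := hedge b
    by_cases hsk : #s = k
    · exact ⟨_, hins, by rw [card_insert_of_notMem hbs]; omega⟩
    · exact ⟨s, hs, hsk⟩
  have hout : #u + 1 = k := by
    obtain ⟨c, hcu⟩ := hne_univ u hu
    obtain ⟨s, hs, hcs, hins⟩ := hedge c
    have hins_k : #(insert c s) = k := by
      by_contra h
      exact hcu (huniq _ hins u hu h huk ▸ mem_insert_self c s)
    rw [card_insert_of_notMem hcs] at hins_k
    rw [← huniq s hs u hu (by omega) huk]
    exact hins_k
  obtain ⟨e, heu⟩ : u.Nonempty := card_pos.1 (by omega)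
  obtain ⟨s, hs, hes, hins⟩ := hedge e
  have hs_k : #s = k := by
    by_contra h
    exact hes (huniq s hs u hu h huk ▸ heu)
  have := huniq _ hins u hu (by rw [card_insert_of_notMem hes]; omega) huk
  rw [← this, card_insert_of_notMem hes] at hout
  omega

lemma card_filter_card_eq_add_card_le [Fintype α] (h𝒜 : 𝒜.vcDim ≤ 1) (huniv : univ ∉ 𝒜)
    {k : ℕ} (hk : k ≠ 1) : #{s ∈ 𝒜 | #s = k} + #𝒜 ≤ 2 * Fintype.card α := by
  have hsplit := card_filter_add_card_filter_not (s := 𝒜) (fun s => #s = k)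
  have hle : #𝒜 ≤ Fintype.card α + 1 := by
    simpa [← Nat.range_succ_eq_Iic, sum_range_succ, add_comm] using card_le_sum_Iic_choose h𝒜
  obtain hlt | heq := hle.lt_or_eq
  · have := card_filter_le 𝒜 (fun s => #s = k)
    omega
  · have := two_le_card_filter_card_ne h𝒜 heq huniv hk
    simp only [ne_eq] at this
    omega

end Finset

section Swaps

variable {n : ℕ}

/-- The pooled sample of `2n` points is indexed by `Fin n ⊕ Fin n` (training ⊕ test);
`swapPerm σ` exchanges `inl i` and `inr i` whenever `σ i`, and `testSet σ` collects the positions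
that become test points. -/
def swapPerm (σ : Fin n → Bool) : Equiv.Perm (Fin n ⊕ Fin n) :=
  Function.Involutive.toPerm (fun j => if σ (j.elim id id) then j.swap else j) <| by
    rintro (i | i) <;> by_cases h : σ i <;> simp [h]

lemma swapPerm_apply (σ : Fin n → Bool) (j : Fin n ⊕ Fin n) :
    swapPerm σ j = if σ (j.elim id id) then j.swap else j :=
  rfl

def testSet (σ : Fin n → Bool) : Finset (Fin n ⊕ Fin n) :=
  univ.image fun i => swapPerm σ (.inr i)

lemma mem_testSet {σ : Fin n → Bool} {j : Fin n ⊕ Fin n} :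
    j ∈ testSet σ ↔ σ (j.elim id id) = j.isLeft := by
  simp only [testSet, mem_image, mem_univ, true_and, swapPerm_apply, Sum.elim_inr, id,
    Sum.swap_inr]
  constructor
  · rintro ⟨i, rfl⟩
    by_cases h : σ i <;> simp [h]
  · intro hj
    refine ⟨j.elim id id, ?_⟩
    rcases j with i | i <;> simp_all

lemma card_filter_forall_eq_mul_pow {ι : Type*} [Fintype ι] [DecidableEq ι] (s : Finset ι)
    (g : ι → Bool) : #{f : ι → Bool | ∀ i ∈ s, f i = g i} * 2 ^ #s = 2 ^ Fintype.card ι := by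
  have hpi : ({f : ι → Bool | ∀ i ∈ s, f i = g i} : Finset _) =
      Fintype.piFinset fun i => if i ∈ s then {g i} else univ := by
    ext f
    simp only [mem_filter, mem_univ, true_and, Fintype.mem_piFinset]
    refine forall_congr' fun i => ?_
    split_ifs with hi <;> simp [hi]
  have hcompl : ({i | i ∉ s} : Finset ι) = sᶜ := by ext; simp
  simp only [hpi, Fintype.card_piFinset, apply_ite card, card_singleton, card_univ,
    Fintype.card_bool, prod_ite, prod_const_one, one_mul, prod_const, hcompl, ← pow_add,
    card_compl]
  rw [Nat.sub_add_cancel (card_le_univ s)]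

lemma card_filter_subset_testSet_mul_le (E : Finset (Fin n ⊕ Fin n)) :
    #{σ : Fin n → Bool | E ⊆ testSet σ} * 2 ^ #E ≤ 2 ^ n := by
  obtain h | ⟨σ₀, hσ₀⟩ := ({σ | E ⊆ testSet σ} : Finset (Fin n → Bool)).eq_empty_or_nonempty
  · simp [h]
  have hσ₀ : E ⊆ testSet σ₀ := (mem_filter.1 hσ₀).2
  set T := E.image (Sum.elim id id)
  have hT : #T = #E := card_image_of_injOn fun j hj j' hj' hjj' => by
    have h := mem_testSet.1 (hσ₀ hj)
    have h' := mem_testSet.1 (hσ₀ hj')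
    rcases j with i | i <;> rcases j' with i' | i' <;>
      simp_all
  have hsub : ({σ | E ⊆ testSet σ} : Finset _) ⊆
      ({σ : Fin n → Bool | ∀ i ∈ T, σ i = σ₀ i} : Finset _) := by
    intro σ hσ
    simp only [mem_filter, mem_univ, true_and, T, forall_mem_image] at hσ ⊢
    intro j hj
    rw [mem_testSet.1 (hσ hj), mem_testSet.1 (hσ₀ hj)]
  calc #{σ : Fin n → Bool | E ⊆ testSet σ} * 2 ^ #E
      ≤ #{σ : Fin n → Bool | ∀ i ∈ T, σ i = σ₀ i} * 2 ^ #T := by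
        rw [hT]; exact Nat.mul_le_mul_right _ (card_le_card hsub)
    _ = 2 ^ n := by
      convert card_filter_forall_eq_mul_pow T σ₀ using 2
      · congr!
      · simp

lemma sum_card_filter_subset_testSet_le (hn : 0 < n) {F : Finset (Finset (Fin n ⊕ Fin n))}
    {d κ : ℕ} (hF : F.vcDim ≤ d) (hdκ : d < κ) (hsize : ∀ E ∈ F, κ ≤ #E ∧ #E ≤ n) :
    ∑ E ∈ F, #{σ : Fin n → Bool | E ⊆ testSet σ} * 2 ^ κ ≤ (2 * n) ^ d * 2 ^ n := by
  have hcard : Fintype.card (Fin n ⊕ Fin n) = 2 * n := by simp [two_mul]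
  have hterm : ∀ E ∈ F, #{σ : Fin n → Bool | E ⊆ testSet σ} * 2 ^ κ ≤ 2 ^ n := fun E hE =>
    (Nat.mul_le_mul_left _ (Nat.pow_le_pow_right two_pos (hsize E hE).1)).trans
      (card_filter_subset_testSet_mul_le E)
  obtain rfl | hd := eq_or_ne d 1
  · have huniv : univ ∉ F := fun h => by
      have := (hsize univ h).2
      rw [card_univ, hcard] at this
      omega
    -- Sauer–Shelah allows `2n + 1` sets here; a set larger than `κ` carries at most half the
    -- weight, and counting sets of size `κ` twice gives at most `4n` by
    -- `card_filter_card_eq_add_card_le`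
    have hlarge : ∀ E ∈ F, #E ≠ κ → 2 * (#{σ : Fin n → Bool | E ⊆ testSet σ} * 2 ^ κ) ≤ 2 ^ n :=
      fun E hE hEκ => calc
        2 * (#{σ : Fin n → Bool | E ⊆ testSet σ} * 2 ^ κ)
            = #{σ : Fin n → Bool | E ⊆ testSet σ} * 2 ^ (κ + 1) := by ring
        _ ≤ #{σ : Fin n → Bool | E ⊆ testSet σ} * 2 ^ #E := by
          gcongr
          · norm_num
          · have := (hsize E hE).1; omega
        _ ≤ 2 ^ n := card_filter_subset_testSet_mul_le E
    have hfew := card_filter_card_eq_add_card_le hF huniv (k := κ) (by omega)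
    rw [hcard] at hfew
    suffices 2 * ∑ E ∈ F, #{σ : Fin n → Bool | E ⊆ testSet σ} * 2 ^ κ ≤
        (#{E ∈ F | #E = κ} + #F) * 2 ^ n by
      have := Nat.mul_le_mul_right (2 ^ n) hfew
      rw [pow_one]
      nlinarith
    rw [mul_sum, add_mul, card_filter, sum_mul, card_eq_sum_ones, sum_mul, ← sum_add_distrib]
    refine sum_le_sum fun E hE => ?_
    by_cases hEκ : #E = κ
    · simp only [hEκ, if_true, one_mul]
      have := hterm E hE
      omega
    · simp only [hEκ, if_false, zero_mul, zero_add, one_mul]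
      exact hlarge E hE hEκ
  · calc ∑ E ∈ F, #{σ : Fin n → Bool | E ⊆ testSet σ} * 2 ^ κ ≤ #F * 2 ^ n := by
          simpa using sum_le_card_nsmul F _ _ hterm
      _ ≤ (2 * n) ^ d * 2 ^ n := by
          gcongr
          rw [← hcard]
          exact card_le_pow_of_vcDim_le (by omega) hF hd

variable {W : Type*} [MeasurableSpace W]

def swapSamples (σ : Fin n → Bool) (p : (Fin n → W) × (Fin n → W)) :
    (Fin n → W) × (Fin n → W) :=
  (fun i => Sum.elim p.1 p.2 (swapPerm σ (.inl i)), fun i => Sum.elim p.1 p.2 (swapPerm σ (.inr i)))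

lemma measurePreserving_swapSamples (σ : Fin n → Bool) (μ : Measure W) [SigmaFinite μ] :
    MeasurePreserving (swapSamples σ) ((Measure.pi fun _ => μ).prod (Measure.pi fun _ => μ))
      ((Measure.pi fun _ => μ).prod (Measure.pi fun _ => μ)) := by
  have hperm : MeasurePreserving (MeasurableEquiv.arrowCongr' (swapPerm σ).symm
      (MeasurableEquiv.refl W)) (Measure.pi fun _ => μ) (Measure.pi fun _ => μ) :=
    measurePreserving_arrowCongr' _ _ _ _ fun _ => MeasurePreserving.id μ
  convert (measurePreserving_sumPiEquivProdPi fun _ => μ).comp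
    (hperm.comp (measurePreserving_sumPiEquivProdPi_symm fun _ => μ))
  ext p i <;> rfl

end Swaps

open Classical in
lemma one_sub_le_measure_compl_of_card_le {Ω ι : Type*} [MeasurableSpace Ω] [Fintype ι]
    [Nonempty ι] {μ : Measure Ω} [IsProbabilityMeasure μ] {f : ι → Ω → Ω}
    (hf : ∀ i, MeasurePreserving (f i) μ μ) {T : Set Ω} {ε : ℝ≥0∞}
    (hT : ∀ ω, (#{i | f i ω ∈ T} : ℝ≥0∞) ≤ Fintype.card ι * ε) : 1 - ε ≤ μ Tᶜ := by
  -- `T` need not be measurable; `C ⊆ T` is measurable with `μ Cᶜ = μ Tᶜ`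
  set C := (toMeasurable μ Tᶜ)ᶜ
  have hC : MeasurableSet C := (measurableSet_toMeasurable μ Tᶜ).compl
  have hcount : ∀ ω, ∑ i, (f i ⁻¹' C).indicator 1 ω ≤ (Fintype.card ι * ε : ℝ≥0∞) := fun ω =>
    calc ∑ i, (f i ⁻¹' C).indicator 1 ω = (#{i | f i ω ∈ C} : ℝ≥0∞) := by
          simp only [Set.indicator_apply, Set.mem_preimage, Pi.one_apply, card_filter,
            Nat.cast_sum, Nat.cast_ite, Nat.cast_one, Nat.cast_zero]
      _ ≤ #{i | f i ω ∈ T} := by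
          gcongr
          exact fun x hxC => by_contra fun hxT => hxC (subset_toMeasurable μ Tᶜ hxT)
      _ ≤ _ := hT ω
  have hμC : Fintype.card ι * μ C ≤ Fintype.card ι * ε :=
    calc Fintype.card ι * μ C = ∑ i, μ (f i ⁻¹' C) := by
          simp [(hf _).measure_preimage hC.nullMeasurableSet]
      _ = ∫⁻ ω, ∑ i, (f i ⁻¹' C).indicator 1 ω ∂μ := by
          rw [lintegral_finsetSum _ fun i _ => measurable_one.indicator ((hf i).measurable hC)]
          simp [lintegral_indicator_one ((hf _).measurable hC)]
      _ ≤ ∫⁻ _, (Fintype.card ι * ε : ℝ≥0∞) ∂μ := lintegral_mono hcount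
      _ = Fintype.card ι * ε := by simp
  calc 1 - ε ≤ 1 - μ C :=
        tsub_le_tsub_left ((ENNReal.mul_le_mul_iff_right (by simp) (by simp)).1 hμC) 1
    _ = μ Tᶜ := by
      rw [measure_compl (measurableSet_toMeasurable μ Tᶜ) (measure_ne_top _ _), measure_univ,
        ENNReal.sub_sub_cancel ENNReal.one_ne_top prob_le_one, measure_toMeasurable]

lemma le_mul_logb_add_logb {n : ℕ} (hn : 0 < n) (d : ℕ) {δ : ℝ} (hδ : 0 < δ) (hδ1 : δ < 1) :
    (d : ℝ) ≤ d * Real.logb 2 (2 * n) + Real.logb 2 (1 / δ) := by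
  have h2n : 1 ≤ Real.logb 2 (2 * n) :=
    (Real.le_logb_iff_rpow_le one_lt_two (by positivity)).2 (by simp; exact_mod_cast hn)
  have h1δ : 0 < Real.logb 2 (1 / δ) := Real.logb_pos one_lt_two (one_lt_one_div hδ hδ1)
  nlinarith

lemma pow_le_two_pow_mul_of_logb_lt {n d κ : ℕ} (hn : 0 < n) {δ : ℝ} (hδ : 0 < δ)
    (hκ : d * Real.logb 2 (2 * n) + Real.logb 2 (1 / δ) < κ) :
    (2 * n : ℝ) ^ d ≤ 2 ^ κ * δ := by
  have h2n : (0 : ℝ) < 2 * n := by positivity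
  have hlt : (2 * n : ℝ) ^ d * (1 / δ) < 2 ^ κ :=
    calc (2 * n : ℝ) ^ d * (1 / δ)
        = (2 : ℝ) ^ (d * Real.logb 2 (2 * n) + Real.logb 2 (1 / δ)) := by
          rw [Real.rpow_add two_pos, mul_comm (d : ℝ), Real.rpow_mul zero_le_two,
            Real.rpow_logb two_pos (by norm_num) h2n, Real.rpow_natCast,
            Real.rpow_logb two_pos (by norm_num) (by positivity)]
      _ < (2 : ℝ) ^ (κ : ℝ) := Real.rpow_lt_rpow_of_exponent_lt one_lt_two hκ
      _ = 2 ^ κ := Real.rpow_natCast 2 κ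
  calc (2 * n : ℝ) ^ d = (2 * n : ℝ) ^ d * (1 / δ) * δ := by field_simp
    _ ≤ 2 ^ κ * δ := by gcongr

section Robust

variable {X : Type*} (U : X → Set X) (H : Set (X → Bool))

def RobustlyLabels (h : X → Bool) (x : X) (b : Bool) : Prop :=
  ∃ z ∈ U x, ∀ x' ∈ Uinv U z, h x' = b

lemma card_le_of_forall_robustlyLabels {d : ℕ} (hd : rdim H (Uinv U) ≤ d) {ι : Type*}
    [Fintype ι] (x : ι → X) (hx : ∀ y : ι → Bool, ∃ h ∈ H, ∀ i, RobustlyLabels U h (x i) (y i)) :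
    Fintype.card ι ≤ d := by
  let e := Fintype.equivFin ι
  have hshat : RelShat H (Uinv U) (x ∘ e.symm) := fun y => by
    obtain ⟨h, hH, hy⟩ := hx (y ∘ e)
    choose z hzU hz using hy
    exact ⟨z ∘ e.symm, h, hH, fun a => ⟨hzU _, fun w hw => by simpa using hz _ w hw⟩⟩
  have : (Fintype.card ι : ℕ∞) ≤ rdim H (Uinv U) :=
    le_iSup₂_of_le (f := fun k (_ : ∃ z : Fin k → X, RelShat H (Uinv U) z) => (k : ℕ∞))
      (Fintype.card ι) ⟨_, hshat⟩ le_rfl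
  exact_mod_cast this.trans hd

open Classical in
noncomputable def flipFamily {ι : Type*} [Fintype ι] [DecidableEq ι] (pt : ι → X × Bool) :
    Finset (Finset ι) :=
  {E | ∃ h ∈ H, ∀ j, RobustlyLabels U h (pt j).1 ((pt j).2 ^^ decide (j ∈ E))}

lemma mem_flipFamily {ι : Type*} [Fintype ι] [DecidableEq ι] {pt : ι → X × Bool}
    {E : Finset ι} : E ∈ flipFamily U H pt ↔
      ∃ h ∈ H, ∀ j, RobustlyLabels U h (pt j).1 ((pt j).2 ^^ decide (j ∈ E)) := by
  simp [flipFamily]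

lemma vcDim_flipFamily_le {d : ℕ} (hd : rdim H (Uinv U) ≤ d) {ι : Type*} [Fintype ι]
    [DecidableEq ι] (pt : ι → X × Bool) : (flipFamily U H pt).vcDim ≤ d := by
  refine Finset.sup_le fun s hs => ?_
  simpa using card_le_of_forall_robustlyLabels U H hd (ι := s) (fun j => (pt j).1) fun y => by
    obtain ⟨E, hE, hsE⟩ :=
      mem_shatterer.1 hs (filter_subset (fun j => ∀ hj : j ∈ s, y ⟨j, hj⟩ ≠ (pt j).2) s)
    obtain ⟨h, hH, hh⟩ := (mem_flipFamily U H).1 hE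
    refine ⟨h, hH, fun j => ?_⟩
    convert hh j using 1
    have hj : (j : ι) ∈ E ↔ y j ≠ (pt j).2 := by
      have := congrArg ((j : ι) ∈ ·) hsE
      simpa [j.2] using this
    cases hy : y j <;> cases hp : (pt j).2 <;> simp_all

variable {n : ℕ}

/-- For `p = ((x, y), (x̃, ỹ))`: there are perturbations `z ∈ U(x)`, `z̃ ∈ U(x̃)` and `h ∈ H` with
`R_{U⁻¹}(h; z, y) = 0`, `R_{U⁻¹}(h; z̃) = 0` and at least `k` errors on `(z̃, ỹ)`. -/
def ExistsConsistentWithErrors (k : ℕ) (p : (Fin n → X × Bool) × (Fin n → X × Bool)) : Prop :=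
  ∃ z : Fin n → X, (∀ i, z i ∈ U (p.1 i).1) ∧ ∃ zt : Fin n → X, (∀ i, zt i ∈ U (p.2 i).1) ∧
    ∃ h ∈ H, (∀ i, ∀ x' ∈ Uinv U (z i), h x' = (p.1 i).2) ∧
      (∀ i, ∀ x' ∈ Uinv U (zt i), h x' = h (zt i)) ∧ k ≤ #{i | h (zt i) ≠ (p.2 i).2}

/-- The flip set is the set of test errors of the witnessing hypothesis. -/
lemma exists_mem_flipFamily_of_swapSamples {k : ℕ} (q : (Fin n → X × Bool) × (Fin n → X × Bool))
    {σ : Fin n → Bool} (hσ : ExistsConsistentWithErrors U H k (swapSamples σ q)) :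
    ∃ E ∈ flipFamily U H (Sum.elim q.1 q.2), k ≤ #E ∧ #E ≤ n ∧ E ⊆ testSet σ := by
  set pt := Sum.elim q.1 q.2
  set π := swapPerm σ
  obtain ⟨z, hz, zt, hzt, h, hH, htrain, htest, herr⟩ := hσ
  set err : Finset (Fin n) := {i | h (zt i) ≠ (pt (π (.inr i))).2}
  have hinj : Function.Injective fun i => π (.inr i) := π.injective.comp Sum.inr_injective
  refine ⟨err.image fun i => π (.inr i), (mem_flipFamily U H).2 ⟨h, hH, fun j => ?_⟩,
    by rwa [card_image_of_injective _ hinj], ?_, image_subset_image (subset_univ _)⟩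
  · obtain ⟨j, rfl⟩ := π.surjective j
    rcases j with i | i
    · have hnot : π (.inl i) ∉ err.image fun i => π (.inr i) := by
        simp [π.injective.eq_iff]
      simpa [hnot] using ⟨z i, hz i, htrain i⟩
    · have hmem : π (.inr i) ∈ (err.image fun i => π (.inr i)) ↔ h (zt i) ≠ (pt (π (.inr i))).2 :=
        by simp [hinj.eq_iff, err]
      refine ⟨zt i, hzt i, fun x' hx' => (htest i x' hx').trans ?_⟩
      simp only [hmem]
      cases h (zt i) <;> cases (pt (π (.inr i))).2 <;> rfl
  · rw [card_image_of_injective _ hinj]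
    exact card_le_univ err |>.trans_eq (Fintype.card_fin n)

open Classical in
lemma card_filter_swapSamples_mul_le (hn : 0 < n) {d κ : ℕ} (hd : rdim H (Uinv U) ≤ d)
    (hdκ : d < κ) (q : (Fin n → X × Bool) × (Fin n → X × Bool)) :
    #{σ | ExistsConsistentWithErrors U H κ (swapSamples σ q)} * 2 ^ κ ≤ (2 * n) ^ d * 2 ^ n := by
  set F := {E ∈ flipFamily U H (Sum.elim q.1 q.2) | κ ≤ #E ∧ #E ≤ n}
  have hcover : ({σ | ExistsConsistentWithErrors U H κ (swapSamples σ q)} : Finset _) ⊆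
      F.biUnion fun E => {σ | E ⊆ testSet σ} := fun σ hσ => by
    obtain ⟨E, hE, hκE, hEn, hEσ⟩ :=
      exists_mem_flipFamily_of_swapSamples U H q (mem_filter.1 hσ).2
    exact mem_biUnion.2 ⟨E, mem_filter.2 ⟨hE, hκE, hEn⟩, mem_filter.2 ⟨mem_univ _, hEσ⟩⟩
  calc #{σ | ExistsConsistentWithErrors U H κ (swapSamples σ q)} * 2 ^ κ
      ≤ (∑ E ∈ F, #{σ : Fin n → Bool | E ⊆ testSet σ}) * 2 ^ κ := by
        gcongr
        exact (card_le_card hcover).trans card_biUnion_le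
    _ ≤ (2 * n) ^ d * 2 ^ n := by
        rw [sum_mul]
        exact sum_card_filter_subset_testSet_le hn
          ((vcDim_mono (filter_subset _ _)).trans (vcDim_flipFamily_le U H hd _)) hdκ
          fun E hE => (mem_filter.1 hE).2

open Classical in
lemma card_filter_swapSamples_le (hn : 0 < n) {d κ : ℕ} (hd : rdim H (Uinv U) ≤ d)
    (hdκ : d < κ) {δ : ℝ} (hδ : 0 < δ) (hκ : d * Real.logb 2 (2 * n) + Real.logb 2 (1 / δ) < κ)
    (q : (Fin n → X × Bool) × (Fin n → X × Bool)) :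
    (#{σ | ExistsConsistentWithErrors U H κ (swapSamples σ q)} : ℝ≥0∞) ≤
      2 ^ n * ENNReal.ofReal δ := by
  have hcount : (#{σ | ExistsConsistentWithErrors U H κ (swapSamples σ q)} : ℝ) * 2 ^ κ ≤
      (2 * n) ^ d * 2 ^ n := by exact_mod_cast card_filter_swapSamples_mul_le U H hn hd hdκ q
  have hpow := pow_le_two_pow_mul_of_logb_lt hn hδ hκ
  have hreal : (#{σ | ExistsConsistentWithErrors U H κ (swapSamples σ q)} : ℝ) ≤ 2 ^ n * δ :=
    le_of_mul_le_mul_right (hcount.trans (by nlinarith [pow_pos (two_pos (α := ℝ)) n]))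
      (by positivity : (0 : ℝ) < 2 ^ κ)
  calc (#{σ | ExistsConsistentWithErrors U H κ (swapSamples σ q)} : ℝ≥0∞)
      = ENNReal.ofReal #{σ | ExistsConsistentWithErrors U H κ (swapSamples σ q)} :=
        (ENNReal.ofReal_natCast _).symm
    _ ≤ ENNReal.ofReal (2 ^ n * δ) := ENNReal.ofReal_le_ofReal hreal
    _ = 2 ^ n * ENNReal.ofReal δ := by
        rw [ENNReal.ofReal_mul (by positivity), ENNReal.ofReal_pow zero_le_two,
          ENNReal.ofReal_ofNat]

lemma ncard_le_of_not_existsConsistentWithErrors {B : ℝ} (hB : 0 ≤ B)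
    {p : (Fin n → X × Bool) × (Fin n → X × Bool)}
    (hp : ¬ExistsConsistentWithErrors U H (⌊B⌋₊ + 1) p) {z : Fin n → X}
    (hz : ∀ i, z i ∈ U (p.1 i).1) {zt : Fin n → X} (hzt : ∀ i, zt i ∈ U (p.2 i).1)
    {h : X → Bool} (hH : h ∈ H) (htrain : ∀ i, ∀ x' ∈ Uinv U (z i), h x' = (p.1 i).2)
    (htest : ∀ i, ∀ x' ∈ Uinv U (zt i), h x' = h (zt i)) :
    ({i | h (zt i) ≠ (p.2 i).2}.ncard : ℝ) ≤ B := by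
  have herr : #{i | h (zt i) ≠ (p.2 i).2} ≤ ⌊B⌋₊ := by
    by_contra hlt
    exact hp ⟨z, hz, zt, hzt, h, hH, htrain, htest, by omega⟩
  calc ({i | h (zt i) ≠ (p.2 i).2}.ncard : ℝ) = #{i | h (zt i) ≠ (p.2 i).2} := by
        rw [Set.ncard_eq_toFinset_card', Set.toFinset_ofPred]
    _ ≤ ⌊B⌋₊ := by exact_mod_cast herr
    _ ≤ B := Nat.floor_le hB

end Robust

theorem stmt_11_general {X : Type*} [MeasurableSpace X] (U : X → Set X)
    (H : Set (X → Bool)) (d n : ℕ) (hn : 0 < n)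
    (hd : rdim H (Uinv U) ≤ (d : ℕ∞))
    (D : Measure (X × Bool)) [IsProbabilityMeasure D]
    (δ : ℝ) (hδ : 0 < δ) (hδ1 : δ < 1) :
    ENNReal.ofReal (1 - δ) ≤
      ((Measure.pi fun _ : Fin n => D).prod (Measure.pi fun _ : Fin n => D))
        {p : (Fin n → X × Bool) × (Fin n → X × Bool) |
          ∀ z : Fin n → X, (∀ i, z i ∈ U ((p.1 i).1)) →
          ∀ zt : Fin n → X, (∀ i, zt i ∈ U ((p.2 i).1)) →
          ∀ h ∈ H,
            (∀ i : Fin n, ∀ x' ∈ Uinv U (z i), h x' = (p.1 i).2) →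
            (∀ i : Fin n, ∀ x' ∈ Uinv U (zt i), h x' = h (zt i)) →
            (Set.ncard {i : Fin n | h (zt i) ≠ (p.2 i).2} : ℝ) / n ≤
              (d * Real.logb 2 (2 * n) + Real.logb 2 (1 / δ)) / n} := by
  set B := (d : ℝ) * Real.logb 2 (2 * n) + Real.logb 2 (1 / δ)
  have hdB : (d : ℝ) ≤ B := le_mul_logb_add_logb hn d hδ hδ1
  set κ := ⌊B⌋₊ + 1
  have hBκ : B < κ := by simpa [κ] using Nat.lt_floor_add_one B
  have hdκ : d < κ := by exact_mod_cast hdB.trans_lt hBκ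
  calc ENNReal.ofReal (1 - δ) = 1 - ENNReal.ofReal δ := by
        rw [ENNReal.ofReal_sub _ hδ.le, ENNReal.ofReal_one]
    _ ≤ _ := one_sub_le_measure_compl_of_card_le (fun σ => measurePreserving_swapSamples σ D)
        (T := {p | ExistsConsistentWithErrors U H κ p}) fun q => by
          simpa using card_filter_swapSamples_le U H hn hd hdκ hδ hBκ q
    _ ≤ _ := measure_mono fun p hp z hz zt hzt h hH htrain htest => by
        gcongr
        exact ncard_le_of_not_existsConsistentWithErrors U H ((Nat.cast_nonneg d).trans hdB) hp
          hz hzt hH htrain htest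

/-- Realizable transductive guarantee: if `rdim_{U⁻¹}(H) ≤ d` and `OPT_{U⁻¹(U)} = 0`,
then with probability ≥ 1 − δ over i.i.d. training and test samples of size `n`, for all
perturbations `z ∈ U(x)`, `z̃ ∈ U(x̃)`, every `ĥ ∈ H` with `R_{U⁻¹}(ĥ; z, y) = 0` and
`R_{U⁻¹}(ĥ; z̃) = 0` has test error at most `(d log(2n) + log(1/δ))/n`. -/
theorem stmt_11 {X : Type*} [MeasurableSpace X] (U : X → Set X)
    (H : Set (X → Bool)) (d n : ℕ) (hn : 0 < n)
    (hd : rdim H (Uinv U) ≤ (d : ℕ∞))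
    (D : Measure (X × Bool)) [IsProbabilityMeasure D]
    (hOPT : (⨅ h : H, D {p : X × Bool | ∃ x' ∈ UinvU U p.1, (h : X → Bool) x' ≠ p.2}) = 0)
    (δ : ℝ) (hδ : 0 < δ) (hδ1 : δ < 1) :
    ENNReal.ofReal (1 - δ) ≤
      ((Measure.pi fun _ : Fin n => D).prod (Measure.pi fun _ : Fin n => D))
        {p : (Fin n → X × Bool) × (Fin n → X × Bool) |
          ∀ z : Fin n → X, (∀ i, z i ∈ U ((p.1 i).1)) →
          ∀ zt : Fin n → X, (∀ i, zt i ∈ U ((p.2 i).1)) →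
          ∀ h ∈ H,
            (∀ i : Fin n, ∀ x' ∈ Uinv U (z i), h x' = (p.1 i).2) →
            (∀ i : Fin n, ∀ x' ∈ Uinv U (zt i), h x' = h (zt i)) →
            (Set.ncard {i : Fin n | h (zt i) ≠ (p.2 i).2} : ℝ) / n ≤
              (d * Real.logb 2 (2 * n) + Real.logb 2 (1 / δ)) / n} :=
  stmt_11_general U H d n hn hd D δ hδ hδ1
end

section
/- (Agnostic error composition) Suppose a predictor ĥ satisfies: (a) R_{U^{-1}}(ĥ; z, y) ≤ OPT + ε where z_i ∈ U(x_i); (b) R_{U^{-1}}(ĥ; z̃) ≤ OPT + ε where z̃_i ∈ U(x̃_i); and (c) |err_{x,y}(ĥ) − err_{x̃,ỹ}(ĥ)| ≤ ε. Then err_{z̃,ỹ}(ĥ) ≤ 2·OPT + 3ε. -/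
/-- Agnostic error composition: if `ĥ` has `U⁻¹`-robust risk ≤ OPT + ε on the perturbed
training set, `U⁻¹`-non-robustness ≤ OPT + ε on the perturbed test set, and its clean
empirical errors on train and test differ by at most ε, then its test error on the
perturbed test set is at most `2·OPT + 3ε`. -/
theorem stmt_16 {X : Type*} (U : X → Set X) (n : ℕ) (hn : 0 < n) (hhat : X → Bool)
    (x xt z zt : Fin n → X) (y yt : Fin n → Bool) (OPT ε : ℝ)
    (hOPT : 0 ≤ OPT) (hε : 0 ≤ ε)
    (hz : ∀ i, z i ∈ U (x i)) (hzt : ∀ i, zt i ∈ U (xt i))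
    (ha : (Set.ncard {i : Fin n | ∃ x' ∈ Uinv U (z i), hhat x' ≠ y i} : ℝ) / n ≤ OPT + ε)
    (hb : (Set.ncard {i : Fin n | ∃ x' ∈ Uinv U (zt i), hhat x' ≠ hhat (zt i)} : ℝ) / n ≤ OPT + ε)
    (hc : |(Set.ncard {i : Fin n | hhat (x i) ≠ y i} : ℝ) / n -
           (Set.ncard {i : Fin n | hhat (xt i) ≠ yt i} : ℝ) / n| ≤ ε) :
    (Set.ncard {i : Fin n | hhat (zt i) ≠ yt i} : ℝ) / n ≤ 2 * OPT + 3 * ε := by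
  have hnpos : (0 : ℝ) < n := by exact_mod_cast hn
  -- step 1: clean train error ≤ OPT + ε
  have hsub1 : {i : Fin n | hhat (x i) ≠ y i} ⊆
      {i : Fin n | ∃ x' ∈ Uinv U (z i), hhat x' ≠ y i} :=
    fun i hi => ⟨x i, hz i, hi⟩
  have h1 : ((Set.ncard {i : Fin n | hhat (x i) ≠ y i} : ℝ)) / n ≤ OPT + ε := by
    refine le_trans ((div_le_div_iff_of_pos_right hnpos).mpr ?_) ha
    exact_mod_cast Set.ncard_le_ncard hsub1 (Set.toFinite _)
  -- step 2: clean test error ≤ OPT + 2ε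
  have h2 : ((Set.ncard {i : Fin n | hhat (xt i) ≠ yt i} : ℝ)) / n ≤ OPT + 2 * ε := by
    have := abs_le.mp hc
    linarith [this.1]
  -- step 3: union bound
  have hsub3 : {i : Fin n | hhat (zt i) ≠ yt i} ⊆
      {i : Fin n | hhat (xt i) ≠ yt i} ∪
      {i : Fin n | ∃ x' ∈ Uinv U (zt i), hhat x' ≠ hhat (zt i)} := by
    intro i hi
    by_cases h : hhat (xt i) = yt i
    · right
      exact ⟨xt i, hzt i, by simp only [Set.mem_setOf_eq] at hi; rw [h]; exact fun e => hi (e ▸ rfl)⟩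
    · left; exact h
  have h3 : (Set.ncard {i : Fin n | hhat (zt i) ≠ yt i} : ℝ) ≤
      (Set.ncard {i : Fin n | hhat (xt i) ≠ yt i} : ℝ) +
      (Set.ncard {i : Fin n | ∃ x' ∈ Uinv U (zt i), hhat x' ≠ hhat (zt i)} : ℝ) := by
    have := Set.ncard_union_le {i : Fin n | hhat (xt i) ≠ yt i}
      {i : Fin n | ∃ x' ∈ Uinv U (zt i), hhat x' ≠ hhat (zt i)}
    have h4 := Set.ncard_le_ncard hsub3 (Set.toFinite _)
    exact_mod_cast le_trans h4 this
  have := (div_le_div_iff_of_pos_right hnpos).mpr h3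
  rw [add_div] at this
  linarith
end
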